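/- arXiv:2302.11798 — 3 statements merged into one kernel-verified Lean document; each statement's English description precedes it below -/
import Mathlib

section
/- For a bounded linear operator X on a complex Hilbert space H and t ∈ [0,1], the weighted numerical radius of the 2×2 off-diagonal operator matrix [[0, X], [X, 0]] equals w_t(X). -/
/-!
For `B = [[0, Y], [Y, 0]]` and `z = (u, v)` one has
`⟪B z, z⟫ = ⟪Y v, u⟫ + ⟪Y u, v⟫ = (⟪Y (u + v), u + v⟫ - ⟪Y (u - v), u - v⟫) / 2`,
so the parallelogram law gives `w(B) ≤ w(Y)`, and the test vectors `(x, x)` give the reverse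
inequality. Since `Y ↦ [[0, Y], [Y, 0]]` is real-linear and commutes with taking adjoints,
`(1 - 2t) B* + B` for `Y = X` is the off-diagonal block operator of `(1 - 2t) X* + X`.
-/

open ContinuousLinearMap in
noncomputable def nr {H : Type*} [NormedAddCommGroup H] [InnerProductSpace ℂ H]
    (T : H →L[ℂ] H) : ℝ :=
  ⨆ x : {x : H // ‖x‖ = 1}, ‖(inner ℂ (T x) (x : H) : ℂ)‖

open ContinuousLinearMap in
noncomputable def wnr {H : Type*} [NormedAddCommGroup H] [InnerProductSpace ℂ H]
    [CompleteSpace H] (t : ℝ) (T : H →L[ℂ] H) : ℝ :=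
  nr ((1 - 2*t) • adjoint T + T)

/-- The 2×2 block operator matrix [[A, B], [C, D]] acting on the Hilbert space H ⊕ H. -/
noncomputable def blk {H : Type*} [NormedAddCommGroup H] [InnerProductSpace ℂ H]
    (A B C D : H →L[ℂ] H) : WithLp 2 (H × H) →L[ℂ] WithLp 2 (H × H) :=
  (((WithLp.prodContinuousLinearEquiv 2 ℂ H H).symm :
      (H × H) →L[ℂ] WithLp 2 (H × H)).comp
    (((A.coprod B).prod (C.coprod D)).comp
      ((WithLp.prodContinuousLinearEquiv 2 ℂ H H : WithLp 2 (H × H) ≃L[ℂ] (H × H)) :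
        WithLp 2 (H × H) →L[ℂ] (H × H))))

section NumericalRadius

variable {K : Type*} [NormedAddCommGroup K] [InnerProductSpace ℂ K]

lemma nr_nonneg (T : K →L[ℂ] K) : 0 ≤ nr T :=
  Real.iSup_nonneg fun _ => norm_nonneg _

lemma bddAbove_range_norm_inner_self (T : K →L[ℂ] K) :
    BddAbove (Set.range fun x : {x : K // ‖x‖ = 1} => ‖inner ℂ (T x) (x : K)‖) := by
  refine ⟨‖T‖, ?_⟩
  rintro _ ⟨⟨x, hx⟩, rfl⟩
  calc ‖inner ℂ (T x) x‖ ≤ ‖T x‖ * ‖x‖ := norm_inner_le_norm _ _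
    _ ≤ ‖T‖ * ‖x‖ * ‖x‖ := by gcongr; exact T.le_opNorm x
    _ = ‖T‖ := by rw [hx, mul_one, mul_one]

lemma norm_inner_self_le_nr_mul_sq (T : K →L[ℂ] K) (u : K) :
    ‖inner ℂ (T u) u‖ ≤ nr T * ‖u‖ ^ 2 := by
  rcases eq_or_ne u 0 with rfl | hu
  · simp
  obtain ⟨r, v, hv, rfl⟩ : ∃ (r : ℂ) (v : K), ‖v‖ = 1 ∧ u = r • v :=
    ⟨‖u‖, (‖u‖ : ℂ)⁻¹ • u, by simp [norm_smul, hu], by simp [smul_smul, hu]⟩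
  have hle : ‖inner ℂ (T v) v‖ ≤ nr T :=
    le_ciSup (bddAbove_range_norm_inner_self T) ⟨v, hv⟩
  simp only [map_smul, inner_smul_left, inner_smul_right, norm_mul, RCLike.norm_conj, norm_smul, hv]
  nlinarith [norm_nonneg r]

lemma nr_le_of_forall_norm_inner_self_le {T : K →L[ℂ] K} {c : ℝ} (hc : 0 ≤ c)
    (h : ∀ u, ‖inner ℂ (T u) u‖ ≤ c * ‖u‖ ^ 2) : nr T ≤ c :=
  Real.iSup_le (fun x => by simpa [x.2] using h x) hc

end NumericalRadius

section BlockOperator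

open ContinuousLinearMap

variable {H : Type*} [NormedAddCommGroup H] [InnerProductSpace ℂ H]

@[simp]
lemma blk_apply_fst (A B C D : H →L[ℂ] H) (z : WithLp 2 (H × H)) :
    (blk A B C D z).fst = A z.fst + B z.snd := rfl

@[simp]
lemma blk_apply_snd (A B C D : H →L[ℂ] H) (z : WithLp 2 (H × H)) :
    (blk A B C D z).snd = C z.fst + D z.snd := rfl

lemma ext_of_fst_snd {S T : WithLp 2 (H × H) →L[ℂ] WithLp 2 (H × H)}
    (h₁ : ∀ z, (S z).fst = (T z).fst) (h₂ : ∀ z, (S z).snd = (T z).snd) : S = T :=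
  ext fun z => WithLp.ofLp_injective 2 (Prod.ext (h₁ z) (h₂ z))

lemma smul_blk (c : ℝ) (A B C D : H →L[ℂ] H) :
    c • blk A B C D = blk (c • A) (c • B) (c • C) (c • D) :=
  ext_of_fst_snd (fun _ => by simp [smul_add]) (fun _ => by simp [smul_add])

lemma blk_add_blk (A B C D A' B' C' D' : H →L[ℂ] H) :
    blk A B C D + blk A' B' C' D' = blk (A + A') (B + B') (C + C') (D + D') :=
  ext_of_fst_snd (fun _ => by simp only [add_apply, WithLp.add_fst, blk_apply_fst]; abel)
    (fun _ => by simp only [add_apply, WithLp.add_snd, blk_apply_snd]; abel)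

lemma adjoint_blk [CompleteSpace H] (A B C D : H →L[ℂ] H) :
    adjoint (blk A B C D) = blk (adjoint A) (adjoint C) (adjoint B) (adjoint D) := by
  refine ((eq_adjoint_iff _ _).2 fun z w => ?_).symm
  simp only [WithLp.prod_inner_apply, WithLp.ofLp_fst, WithLp.ofLp_snd, blk_apply_fst,
    blk_apply_snd, inner_add_left, inner_add_right, adjoint_inner_left]
  ring

lemma inner_blk_offDiag_self (Y : H →L[ℂ] H) (z : WithLp 2 (H × H)) :
    inner ℂ (blk 0 Y Y 0 z) z =
      (inner ℂ (Y (z.fst + z.snd)) (z.fst + z.snd) -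
        inner ℂ (Y (z.fst - z.snd)) (z.fst - z.snd)) / 2 := by
  simp only [WithLp.prod_inner_apply, WithLp.ofLp_fst, WithLp.ofLp_snd, blk_apply_fst,
    blk_apply_snd, zero_apply, zero_add, add_zero, map_add, map_sub,
    inner_add_left, inner_add_right, inner_sub_left, inner_sub_right]
  ring

lemma nr_blk_offDiag_le (Y : H →L[ℂ] H) : nr (blk 0 Y Y 0) ≤ nr Y := by
  refine nr_le_of_forall_norm_inner_self_le (nr_nonneg Y) fun z => ?_
  have hpar := parallelogram_law_with_norm ℂ z.fst z.snd
  calc ‖inner ℂ (blk 0 Y Y 0 z) z‖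
      ≤ (‖inner ℂ (Y (z.fst + z.snd)) (z.fst + z.snd)‖ +
          ‖inner ℂ (Y (z.fst - z.snd)) (z.fst - z.snd)‖) / 2 := by
        rw [inner_blk_offDiag_self, norm_div, Complex.norm_two]
        gcongr
        exact norm_sub_le _ _
    _ ≤ (nr Y * ‖z.fst + z.snd‖ ^ 2 + nr Y * ‖z.fst - z.snd‖ ^ 2) / 2 := by
        gcongr <;> exact norm_inner_self_le_nr_mul_sq Y _
    _ = nr Y * ‖z‖ ^ 2 := by
        rw [WithLp.prod_norm_sq_eq_of_L2]; linear_combination (nr Y / 2) * hpar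

lemma nr_le_nr_blk_offDiag (Y : H →L[ℂ] H) : nr Y ≤ nr (blk 0 Y Y 0) := by
  refine nr_le_of_forall_norm_inner_self_le (nr_nonneg _) fun x => ?_
  set z : WithLp 2 (H × H) := WithLp.toLp 2 (x, x)
  have hz : ‖z‖ ^ 2 = 2 * ‖x‖ ^ 2 := by
    rw [WithLp.prod_norm_sq_eq_of_L2, two_mul]; rfl
  have hinner : inner ℂ (blk 0 Y Y 0 z) z = 2 * inner ℂ (Y x) x := by
    simp only [z, WithLp.prod_inner_apply, WithLp.ofLp_fst, WithLp.ofLp_snd, blk_apply_fst,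
      blk_apply_snd, zero_apply, zero_add, add_zero, two_mul]
    rfl
  have hbound := norm_inner_self_le_nr_mul_sq (blk 0 Y Y 0) z
  rw [hinner, hz, norm_mul, Complex.norm_two] at hbound
  linarith

lemma nr_blk_offDiag (Y : H →L[ℂ] H) : nr (blk 0 Y Y 0) = nr Y :=
  (nr_blk_offDiag_le Y).antisymm (nr_le_nr_blk_offDiag Y)

end BlockOperator

open ContinuousLinearMap

variable {H : Type*} [NormedAddCommGroup H] [InnerProductSpace ℂ H] [CompleteSpace H]

theorem stmt6_general (t : ℝ) (X : H →L[ℂ] H) :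
    wnr t (blk 0 X X 0) = wnr t X := by
  rw [wnr, wnr, adjoint_blk, LinearIsometryEquiv.map_zero, smul_blk, blk_add_blk]
  simp only [smul_zero, add_zero, nr_blk_offDiag]

theorem stmt6 (t : ℝ) (ht : t ∈ Set.Icc (0:ℝ) 1) (X : H →L[ℂ] H) :
    wnr t (blk 0 X X 0) = wnr t X :=
  stmt6_general t X
end

section
/- For vectors x, y, e in a complex Hilbert space H with ‖e‖ = 1 and α ∈ [0,1], |⟨x,e⟩⟨e,y⟩|^2 ≤ (1/4)·[(1+α)·‖x‖^2‖y‖^2 + (3-α)·‖x‖‖y‖·|⟨x,y⟩|]. -/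
/-!
Buzano's inequality `2 |⟪x, e⟫⟪e, y⟫| ≤ ‖x‖‖y‖ + |⟪x, y⟫|` is Cauchy–Schwarz applied to `x`
and the reflection of `y` in the line through `e`. Squaring it, the claimed bound exceeds
`((‖x‖‖y‖ + |⟪x, y⟫|) / 2) ^ 2` by `(‖x‖‖y‖ - |⟪x, y⟫|)(α‖x‖‖y‖ + |⟪x, y⟫|) / 4`,
which is nonnegative by Cauchy–Schwarz.
-/

section

variable {𝕜 E : Type*} [RCLike 𝕜] [NormedAddCommGroup E] [InnerProductSpace 𝕜 E]

namespace Submodule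

theorem two_mul_norm_inner_starProjection_le (K : Submodule 𝕜 E) [K.HasOrthogonalProjection]
    (x y : E) :
    2 * ‖inner 𝕜 x (K.starProjection y)‖ ≤ ‖x‖ * ‖y‖ + ‖inner 𝕜 x y‖ := by
  have hreflect :
      inner 𝕜 x (K.reflection y) = 2 * inner 𝕜 x (K.starProjection y) - inner 𝕜 x y := by
    rw [reflection_apply, inner_sub_right, two_smul, inner_add_right, two_mul]
  calc 2 * ‖inner 𝕜 x (K.starProjection y)‖
      = ‖inner 𝕜 x (K.reflection y) + inner 𝕜 x y‖ := by
        rw [hreflect, sub_add_cancel, norm_mul, RCLike.norm_two]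
    _ ≤ ‖inner 𝕜 x (K.reflection y)‖ + ‖inner 𝕜 x y‖ := norm_add_le _ _
    _ ≤ ‖x‖ * ‖y‖ + ‖inner 𝕜 x y‖ := by
        gcongr
        simpa using norm_inner_le_norm (𝕜 := 𝕜) x (K.reflection y)

end Submodule

theorem two_mul_norm_inner_mul_inner_le {e : E} (he : ‖e‖ = 1) (x y : E) :
    2 * ‖inner 𝕜 x e * inner 𝕜 e y‖ ≤ ‖x‖ * ‖y‖ + ‖inner 𝕜 x y‖ := by
  simpa [Submodule.starProjection_unit_singleton 𝕜 he, inner_smul_right, mul_comm]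
    using Submodule.two_mul_norm_inner_starProjection_le (𝕜 ∙ e) x y

end

theorem stmt17 {H : Type*} [NormedAddCommGroup H] [InnerProductSpace ℂ H]
    (x y e : H) (he : ‖e‖ = 1) (α : ℝ) (hα : α ∈ Set.Icc (0:ℝ) 1) :
    ‖(inner ℂ x e : ℂ) * (inner ℂ e y : ℂ)‖ ^ 2 ≤
      (1/4) * ((1 + α) * ‖x‖^2 * ‖y‖^2
        + (3 - α) * ‖x‖ * ‖y‖ * ‖(inner ℂ x y : ℂ)‖) := by
  set B := ‖(inner ℂ x e : ℂ) * (inner ℂ e y : ℂ)‖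
  set c := ‖(inner ℂ x y : ℂ)‖
  set P := ‖x‖ * ‖y‖
  have hBuzano : 2 * B ≤ P + c := two_mul_norm_inner_mul_inner_le he x y
  have hcP : c ≤ P := norm_inner_le_norm x y
  have hgap : 0 ≤ (P - c) * (α * P + c) :=
    mul_nonneg (sub_nonneg.2 hcP) (add_nonneg (mul_nonneg hα.1 (by positivity)) (norm_nonneg _))
  calc B ^ 2 ≤ ((P + c) / 2) ^ 2 := by gcongr; linarith
    _ ≤ ((P + c) / 2) ^ 2 + (P - c) * (α * P + c) / 4 := by linarith
    _ = _ := by ring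
end

section
/- For vectors x, y, e in a complex Hilbert space H with ‖e‖ = 1 and α ∈ [0,1], |⟨x,e⟩⟨e,y⟩|^2 ≤ (α/4)·(‖x‖^2‖y‖^2 + 2‖x‖‖y‖|⟨x,y⟩| + |⟨x,y⟩|^2) + ((1-α)/2)·(‖x‖‖y‖ + |⟨x,y⟩|)·|⟨x,e⟩⟨e,y⟩|. -/
/-!
The vector `2⟪e, x⟫ e - x` is the reflection of `x` in the line through the unit vector `e`, so it
has norm `‖x‖`, and `⟪x, e⟫⟪e, y⟫` is the average of its inner product with `y` and `⟪x, y⟫`.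
Cauchy–Schwarz then gives Buzano's inequality `t ≤ B / 2` for `t = ‖⟪x, e⟫⟪e, y⟫‖` and
`B = ‖x‖‖y‖ + ‖⟪x, y⟫‖`, and the claim is the convex combination, with weights `α` and `1 - α`,
of its two consequences `t² ≤ (B / 2)²` and `t² ≤ (B / 2) t`.
-/

open RCLike

section Buzano

variable {𝕜 E : Type*} [RCLike 𝕜] [NormedAddCommGroup E] [InnerProductSpace 𝕜 E]

local notation "⟪" x ", " y "⟫" => inner 𝕜 x y

theorem norm_two_inner_smul_sub_of_norm_eq_one {e : E} (he : ‖e‖ = 1) (x : E) :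
    ‖(2 * ⟪e, x⟫) • e - x‖ = ‖x‖ := by
  have hre : re ⟪(2 * ⟪e, x⟫) • e, x⟫ = 2 * ‖⟪e, x⟫‖ ^ 2 := by
    rw [inner_smul_left, map_mul (starRingEnd 𝕜), map_ofNat, mul_assoc, RCLike.conj_mul,
      ← ofReal_pow]
    simp
  have hsq : ‖(2 * ⟪e, x⟫) • e - x‖ ^ 2 = ‖x‖ ^ 2 := by
    rw [@norm_sub_sq 𝕜, hre, norm_smul, he, mul_one, norm_mul, RCLike.norm_two]
    ring
  exact (pow_left_inj₀ (norm_nonneg _) (norm_nonneg _) two_ne_zero).1 hsq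

theorem inner_mul_inner_eq_div_two (x y e : E) :
    ⟪x, e⟫ * ⟪e, y⟫ = (⟪(2 * ⟪e, x⟫) • e - x, y⟫ + ⟪x, y⟫) / 2 := by
  rw [inner_sub_left, inner_smul_left, map_mul, map_ofNat, inner_conj_symm]
  ring

theorem norm_inner_mul_inner_le_of_norm_eq_one {e : E} (he : ‖e‖ = 1) (x y : E) :
    ‖⟪x, e⟫ * ⟪e, y⟫‖ ≤ (‖x‖ * ‖y‖ + ‖⟪x, y⟫‖) / 2 := by
  rw [inner_mul_inner_eq_div_two, norm_div, RCLike.norm_two]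
  gcongr
  calc ‖⟪(2 * ⟪e, x⟫) • e - x, y⟫ + ⟪x, y⟫‖
      ≤ ‖⟪(2 * ⟪e, x⟫) • e - x, y⟫‖ + ‖⟪x, y⟫‖ := norm_add_le _ _
    _ ≤ ‖x‖ * ‖y‖ + ‖⟪x, y⟫‖ := by
      gcongr
      simpa only [norm_two_inner_smul_sub_of_norm_eq_one he x] using
        norm_inner_le_norm (𝕜 := 𝕜) ((2 * ⟪e, x⟫) • e - x) y

end Buzano

theorem sq_le_convex_comb_of_le_half {t B α : ℝ} (ht : 0 ≤ t) (htB : t ≤ B / 2)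
    (hα : α ∈ Set.Icc (0 : ℝ) 1) :
    t ^ 2 ≤ α / 4 * B ^ 2 + (1 - α) / 2 * B * t := by
  obtain ⟨hα0, hα1⟩ := hα
  have hsq : t ^ 2 ≤ (B / 2) ^ 2 := pow_le_pow_left₀ ht htB 2
  have hlin : t ^ 2 ≤ B / 2 * t := by nlinarith
  nlinarith [mul_le_mul_of_nonneg_left hsq hα0, mul_le_mul_of_nonneg_left hlin (sub_nonneg.2 hα1)]

theorem stmt18 {H : Type*} [NormedAddCommGroup H] [InnerProductSpace ℂ H]
    (x y e : H) (he : ‖e‖ = 1) (α : ℝ) (hα : α ∈ Set.Icc (0:ℝ) 1) :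
    ‖(inner ℂ x e : ℂ) * (inner ℂ e y : ℂ)‖ ^ 2 ≤
      (α/4) * (‖x‖^2 * ‖y‖^2 + 2 * ‖x‖ * ‖y‖ * ‖(inner ℂ x y : ℂ)‖
          + ‖(inner ℂ x y : ℂ)‖^2)
      + ((1 - α)/2) * (‖x‖ * ‖y‖ + ‖(inner ℂ x y : ℂ)‖)
          * ‖(inner ℂ x e : ℂ) * (inner ℂ e y : ℂ)‖ := by
  calc _ ≤ α / 4 * (‖x‖ * ‖y‖ + ‖(inner ℂ x y : ℂ)‖) ^ 2
        + (1 - α) / 2 * (‖x‖ * ‖y‖ + ‖(inner ℂ x y : ℂ)‖) * ‖(inner ℂ x e : ℂ) * inner ℂ e y‖ :=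
        sq_le_convex_comb_of_le_half (norm_nonneg _)
          (norm_inner_mul_inner_le_of_norm_eq_one he x y) hα
    _ = _ := by ring
end
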